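/- For any nonnegative integer N, positive integer l, and k = 0 (Euler case): ∑_{m,n≥0} x^{m+n} q^{(m+n)l + m(m+1)/2} [N − l choose m]_q [N − l + ⌊n/2⌋ choose ⌊n/2⌋]_{q^2} = 1/∏_{j=0}^{N−l}(1 − x q^{l+j}), assuming N ≥ l. -/

import Mathlib

/-!
The summand is a product of a function of `m` and a function of `n`, so with `a = x q^l` and
`M = N - l` the double sum factors. The `m`-sum is finite and Cauchy's `q`-binomial theorem
evaluates it to `(-a q; q)_M`. In the `n`-sum the terms `n = 2r` and `n = 2r + 1` share the
coefficient `[M + r choose r]_{q²}`, which turns it into `(1 + a)` times the `q`-binomial series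
`∑ [M + r choose r]_{q²} (a²)^r = 1 / (a²; q²)_{M+1}`. Finally `(a²; q²)_n = (a; q)_n (-a; q)_n`,
and `(1 + a) (-a q; q)_M = (-a; q)_{M+1}` cancels.
-/

open Finset

/-- Finite q-Pochhammer symbol `(a; q)_n = ∏_{j=0}^{n-1} (1 - a q^j)`. -/
noncomputable def qPoch (a q : ℂ) (n : ℕ) : ℂ := ∏ j ∈ Finset.range n, (1 - a * q ^ j)

/-- Infinite q-Pochhammer symbol `(a; q)_∞`. -/
noncomputable def qPochInf (a q : ℂ) : ℂ := ∏' j : ℕ, (1 - a * q ^ j)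

/-- Gaussian binomial coefficient `[a choose b]_q`, equal to
`(q;q)_a / ((q;q)_b (q;q)_{a-b})` when `a ≥ b ≥ 0`, and `0` otherwise. -/
noncomputable def qbinom (q : ℂ) (a b : ℤ) : ℂ :=
  if 0 ≤ b ∧ b ≤ a then
    qPoch q q a.toNat / (qPoch q q b.toNat * qPoch q q (a - b).toNat)
  else 0

lemma one_sub_ne_zero_of_norm_lt_one {c : ℂ} (hc : ‖c‖ < 1) : 1 - c ≠ 0 := by
  rw [sub_ne_zero]
  rintro rfl
  simp at hc

lemma norm_mul_pow_lt_one {a q : ℂ} (ha : ‖a‖ < 1) (hq : ‖q‖ ≤ 1) (n : ℕ) :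
    ‖a * q ^ n‖ < 1 := by
  rw [norm_mul, norm_pow]
  exact (mul_le_of_le_one_right (norm_nonneg a) (pow_le_one₀ (norm_nonneg q) hq)).trans_lt ha

lemma one_sub_pow_succ_ne_zero {Q : ℂ} (hQ : ‖Q‖ < 1) (n : ℕ) : 1 - Q ^ (n + 1) ≠ 0 :=
  one_sub_ne_zero_of_norm_lt_one <| by
    rw [norm_pow]
    exact pow_lt_one₀ (norm_nonneg Q) hQ n.succ_ne_zero

lemma qPoch_zero (a q : ℂ) : qPoch a q 0 = 1 := prod_range_zero _

lemma qPoch_succ (a q : ℂ) (n : ℕ) : qPoch a q (n + 1) = qPoch a q n * (1 - a * q ^ n) :=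
  prod_range_succ _ _

lemma qPoch_self_succ (Q : ℂ) (n : ℕ) :
    qPoch Q Q (n + 1) = qPoch Q Q n * (1 - Q ^ (n + 1)) := by
  rw [qPoch_succ, ← pow_succ']

lemma qPoch_succ' (a q : ℂ) (n : ℕ) : qPoch a q (n + 1) = (1 - a) * qPoch (a * q) q n := by
  simp only [qPoch, prod_range_succ', pow_succ', mul_assoc, pow_zero, mul_one, mul_comm (1 - a)]

lemma qPoch_add (a q : ℂ) (m n : ℕ) :
    qPoch a q (m + n) = qPoch a q m * qPoch (a * q ^ m) q n := by
  simp only [qPoch, prod_range_add, pow_add, mul_assoc]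

lemma qPoch_sq (a q : ℂ) (n : ℕ) :
    qPoch (a ^ 2) (q ^ 2) n = qPoch a q n * qPoch (-a) q n := by
  simp only [qPoch, ← prod_mul_distrib]
  exact prod_congr rfl fun j _ => by ring

lemma qPoch_ne_zero {a q : ℂ} (ha : ‖a‖ < 1) (hq : ‖q‖ ≤ 1) (n : ℕ) : qPoch a q n ≠ 0 :=
  prod_ne_zero_iff.mpr fun j _ => one_sub_ne_zero_of_norm_lt_one (norm_mul_pow_lt_one ha hq j)

lemma qPoch_neg_mul_mul_inv_qPoch_sq {a q : ℂ} (ha : ‖a‖ < 1) (hq : ‖q‖ ≤ 1) (n : ℕ) :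
    qPoch (-(a * q)) q n * ((1 + a) * (qPoch (a ^ 2) (q ^ 2) (n + 1))⁻¹)
      = (qPoch a q (n + 1))⁻¹ := by
  have hsucc : (1 + a) * qPoch (-(a * q)) q n = qPoch (-a) q (n + 1) := by
    rw [qPoch_succ', sub_neg_eq_add, neg_mul]
  have hne := qPoch_ne_zero (a := -a) (by rwa [norm_neg]) hq (n + 1)
  rw [← mul_assoc, mul_comm _ (1 + a), hsucc, qPoch_sq]
  field_simp

lemma norm_qPoch_le {a q : ℂ} (ha : ‖a‖ ≤ 1) (hq : ‖q‖ ≤ 1) (n : ℕ) :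
    ‖qPoch a q n‖ ≤ 2 ^ n := by
  have hfactor (j : ℕ) : ‖1 - a * q ^ j‖ ≤ 2 := calc
    ‖1 - a * q ^ j‖ ≤ ‖(1 : ℂ)‖ + ‖a‖ * ‖q‖ ^ j := by
      rw [← norm_pow, ← norm_mul]
      exact norm_sub_le _ _
    _ ≤ 1 + 1 := by
      rw [norm_one]
      gcongr
      exact mul_le_one₀ ha (by positivity) (pow_le_one₀ (norm_nonneg q) hq)
    _ = 2 := one_add_one_eq_two
  calc ‖qPoch a q n‖ ≤ ∏ j ∈ range n, ‖1 - a * q ^ j‖ := Finset.norm_prod_le _ _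
    _ ≤ ∏ _j ∈ range n, (2 : ℝ) := prod_le_prod (fun _ _ => norm_nonneg _) fun j _ => hfactor j
    _ = 2 ^ n := by rw [prod_const, card_range]

section qbinomNat

noncomputable def qbinomNat (Q : ℂ) (n k : ℕ) : ℂ :=
  if k ≤ n then qPoch Q Q n / (qPoch Q Q k * qPoch Q Q (n - k)) else 0

lemma qbinom_natCast (Q : ℂ) (n k : ℕ) : qbinom Q n k = qbinomNat Q n k := by
  by_cases h : k ≤ n
  · rw [qbinom, qbinomNat, if_pos (by omega), if_pos h, ← Nat.cast_sub h]
    simp only [Int.toNat_natCast]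
  · rw [qbinom, qbinomNat, if_neg (by omega), if_neg h]

lemma qbinomNat_of_lt (Q : ℂ) {n k : ℕ} (h : n < k) : qbinomNat Q n k = 0 := by
  simp [qbinomNat, h.not_ge]

variable {Q : ℂ}

lemma qbinomNat_zero_right (hQ : ‖Q‖ < 1) (n : ℕ) : qbinomNat Q n 0 = 1 := by
  simp [qbinomNat, qPoch_zero, div_self (qPoch_ne_zero hQ hQ.le n)]

lemma qbinomNat_self (hQ : ‖Q‖ < 1) (n : ℕ) : qbinomNat Q n n = 1 := by
  simp [qbinomNat, qPoch_zero, div_self (qPoch_ne_zero hQ hQ.le n)]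

lemma qbinomNat_succ_succ (hQ : ‖Q‖ < 1) (n k : ℕ) :
    qbinomNat Q (n + 1) (k + 1) = qbinomNat Q n k + Q ^ (k + 1) * qbinomNat Q n (k + 1) := by
  rcases lt_trichotomy k n with h | rfl | h
  · obtain ⟨d, rfl⟩ : ∃ d, n = k + 1 + d := ⟨n - (k + 1), by omega⟩
    have hk := qPoch_ne_zero hQ hQ.le k
    have hd := qPoch_ne_zero hQ hQ.le d
    have hk' := one_sub_pow_succ_ne_zero hQ k
    have hd' := one_sub_pow_succ_ne_zero hQ d
    simp only [qbinomNat, if_pos (by omega : k + 1 ≤ k + 1 + d + 1),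
      if_pos (by omega : k ≤ k + 1 + d), if_pos (by omega : k + 1 ≤ k + 1 + d),
      show k + 1 + d + 1 - (k + 1) = d + 1 by omega, show k + 1 + d - k = d + 1 by omega,
      show k + 1 + d - (k + 1) = d by omega,
      qPoch_self_succ Q (k + 1 + d), qPoch_self_succ Q k, qPoch_self_succ Q d]
    field_simp
    ring
  · rw [qbinomNat_self hQ, qbinomNat_self hQ, qbinomNat_of_lt Q (Nat.lt_succ_self k)]
    ring
  · rw [qbinomNat_of_lt Q (by omega), qbinomNat_of_lt Q h, qbinomNat_of_lt Q (by omega)]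
    ring

end qbinomNat

section qBinomialTheorem

variable {Q : ℂ}

theorem sum_range_qbinomNat_mul (hQ : ‖Q‖ < 1) (M : ℕ) (z : ℂ) :
    ∑ m ∈ range (M + 1), qbinomNat Q M m * (Q ^ m.choose 2 * z ^ m) = qPoch (-z) Q M := by
  induction M generalizing z with
  | zero => simp [qbinomNat_zero_right hQ, qPoch_zero]
  | succ M ih =>
    have hterm (m : ℕ) : qbinomNat Q (M + 1) (m + 1) * (Q ^ (m + 1).choose 2 * z ^ (m + 1))
        = z * (qbinomNat Q M m * (Q ^ m.choose 2 * (z * Q) ^ m))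
          + qbinomNat Q M (m + 1) * (Q ^ (m + 1).choose 2 * (z * Q) ^ (m + 1)) := by
      rw [qbinomNat_succ_succ hQ, Nat.choose_succ_succ', Nat.choose_one_right]
      ring
    have hshift : ∑ m ∈ range (M + 1),
          qbinomNat Q M (m + 1) * (Q ^ (m + 1).choose 2 * (z * Q) ^ (m + 1))
        + qbinomNat Q (M + 1) 0 * (Q ^ (0 : ℕ).choose 2 * z ^ 0) = qPoch (-(z * Q)) Q M := by
      rw [← ih, sum_range_succ, qbinomNat_of_lt Q M.lt_succ_self, sum_range_succ' _ M]
      simp [qbinomNat_zero_right hQ]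
    rw [sum_range_succ', sum_congr rfl fun m _ => hterm m, sum_add_distrib, ← mul_sum, ih,
      add_assoc, hshift, qPoch_succ', neg_mul]
    ring

theorem qbinomNat_add_self (hQ : ‖Q‖ < 1) (M k : ℕ) :
    qbinomNat Q (M + k) k = qPoch (Q ^ (k + 1)) Q M / qPoch Q Q M := by
  rw [qbinomNat, if_pos (Nat.le_add_left k M), Nat.add_sub_cancel, add_comm M, qPoch_add,
    ← pow_succ', mul_div_mul_left _ _ (qPoch_ne_zero hQ hQ.le k)]

theorem norm_qbinomNat_add_self_le (hQ : ‖Q‖ < 1) (M k : ℕ) :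
    ‖qbinomNat Q (M + k) k‖ ≤ 2 ^ M / ‖qPoch Q Q M‖ := by
  rw [qbinomNat_add_self hQ, norm_div]
  gcongr
  exact norm_qPoch_le (by rw [norm_pow]; exact pow_le_one₀ (norm_nonneg Q) hQ.le) hQ.le M

theorem summable_norm_qbinomNat_add_self_mul (hQ : ‖Q‖ < 1) (M : ℕ) {z : ℂ} (hz : ‖z‖ < 1) :
    Summable fun k => ‖qbinomNat Q (M + k) k * z ^ k‖ := by
  refine .of_nonneg_of_le (fun k => norm_nonneg _) (fun k => ?_)
    ((summable_geometric_of_lt_one (norm_nonneg z) hz).mul_left (2 ^ M / ‖qPoch Q Q M‖))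
  rw [norm_mul, norm_pow]
  gcongr
  exact norm_qbinomNat_add_self_le hQ M k

theorem tsum_qbinomNat_add_self_mul (hQ : ‖Q‖ < 1) (M : ℕ) {z : ℂ} (hz : ‖z‖ < 1) :
    ∑' k, qbinomNat Q (M + k) k * z ^ k = (qPoch z Q (M + 1))⁻¹ := by
  induction M generalizing z with
  | zero =>
    simp only [zero_add, qbinomNat_self hQ, one_mul, tsum_geometric_of_norm_lt_one hz]
    simp [qPoch]
  | succ M ih =>
    have hzQ : ‖z * Q‖ < 1 := by simpa using norm_mul_pow_lt_one hz hQ.le 1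
    have hsum := (summable_norm_qbinomNat_add_self_mul hQ (M + 1) hz).of_norm
    have hsum' := (summable_norm_qbinomNat_add_self_mul hQ M hzQ).of_norm
    have hterm (k : ℕ) : qbinomNat Q (M + 1 + (k + 1)) (k + 1) * z ^ (k + 1)
        = z * (qbinomNat Q (M + 1 + k) k * z ^ k)
          + qbinomNat Q (M + (k + 1)) (k + 1) * (z * Q) ^ (k + 1) := by
      rw [show M + 1 + (k + 1) = M + 1 + k + 1 by ring, qbinomNat_succ_succ hQ,
        show M + 1 + k = M + (k + 1) by ring]
      ring
    -- Pascal's rule gives `S_{M+1}(z) = z S_{M+1}(z) + S_M(zQ)` for `S_M(z) = ∑ [M+k, k] z^k`.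
    have hrec : ∑' k, qbinomNat Q (M + 1 + k) k * z ^ k
        = z * ∑' k, qbinomNat Q (M + 1 + k) k * z ^ k
          + ∑' k, qbinomNat Q (M + k) k * (z * Q) ^ k := by
      nth_rw 1 [hsum.tsum_eq_zero_add]
      rw [hsum'.tsum_eq_zero_add, tsum_congr hterm,
        (hsum.mul_left z).tsum_add ((summable_nat_add_iff 1).mpr hsum'), tsum_mul_left]
      simp only [add_zero, qbinomNat_zero_right hQ, pow_zero]
      ring
    have hP : (qPoch (z * Q) Q (M + 1))⁻¹
        = (1 - z) * ∑' k, qbinomNat Q (M + 1 + k) k * z ^ k := by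
      rw [← ih hzQ]
      linear_combination -hrec
    rw [qPoch_succ', mul_inv, hP, ← mul_assoc,
      inv_mul_cancel₀ (one_sub_ne_zero_of_norm_lt_one hz), one_mul]

end qBinomialTheorem

section EvenOdd

variable {a : ℂ} {f : ℕ → ℂ}

lemma comp_div_two_mul_pow_two_mul (r : ℕ) :
    f (2 * r / 2) * a ^ (2 * r) = f r * (a ^ 2) ^ r := by
  rw [Nat.mul_div_cancel_left r two_pos, pow_mul]

lemma comp_div_two_mul_pow_two_mul_add_one (r : ℕ) :
    f ((2 * r + 1) / 2) * a ^ (2 * r + 1) = a * (f r * (a ^ 2) ^ r) := by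
  rw [show (2 * r + 1) / 2 = r by omega, pow_succ, pow_mul]
  ring

lemma summable_norm_comp_div_two_mul_pow (hf : Summable fun r => ‖f r * (a ^ 2) ^ r‖) :
    Summable fun n => ‖f (n / 2) * a ^ n‖ :=
  .even_add_odd (hf.congr fun r => by rw [comp_div_two_mul_pow_two_mul])
    ((hf.mul_left ‖a‖).congr fun r => by
      rw [comp_div_two_mul_pow_two_mul_add_one, norm_mul _ (f r * _)])

lemma tsum_comp_div_two_mul_pow (hf : Summable fun r => f r * (a ^ 2) ^ r) :
    ∑' n, f (n / 2) * a ^ n = (1 + a) * ∑' r, f r * (a ^ 2) ^ r := by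
  rw [← tsum_even_add_odd (hf.congr fun r => (comp_div_two_mul_pow_two_mul r).symm)
    ((hf.mul_left a).congr fun r => (comp_div_two_mul_pow_two_mul_add_one r).symm)]
  simp only [comp_div_two_mul_pow_two_mul, comp_div_two_mul_pow_two_mul_add_one, tsum_mul_left]
  ring

end EvenOdd

lemma triangle_eq_choose_two_add (m : ℕ) : m * (m + 1) / 2 = m.choose 2 + m := by
  rw [Nat.choose_two_right, ← Nat.triangle_succ, Nat.add_sub_cancel, mul_comm]

lemma euler_summand_eq_mul {N l : ℕ} (hN : l ≤ N) (q x : ℂ) (m n : ℕ) :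
    x ^ (m + n) * q ^ ((m + n) * l + m * (m + 1) / 2) * qbinom q ((N : ℤ) - l) m
        * qbinom (q ^ 2) ((N : ℤ) - l + (n / 2 : ℕ)) ((n / 2 : ℕ) : ℤ)
      = qbinomNat q (N - l) m * (q ^ m.choose 2 * (x * q ^ l * q) ^ m)
        * (qbinomNat (q ^ 2) (N - l + n / 2) (n / 2) * (x * q ^ l) ^ n) := by
  rw [← Nat.cast_sub hN, ← Nat.cast_add, qbinom_natCast, qbinom_natCast,
    triangle_eq_choose_two_add]
  ring

theorem stmt19_general (N l : ℕ) (hN : l ≤ N) (q x : ℂ) (hq : ‖q‖ < 1)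
    (hx : ‖x‖ < 1) :
    ∑' p : ℕ × ℕ, x ^ (p.1 + p.2) * q ^ ((p.1 + p.2) * l + p.1 * (p.1 + 1) / 2)
        * qbinom q ((N : ℤ) - l) p.1
        * qbinom (q ^ 2) ((N : ℤ) - l + (p.2 / 2 : ℕ)) ((p.2 / 2 : ℕ) : ℤ)
      = 1 / ∏ j ∈ Finset.range (N - l + 1), (1 - x * q ^ (l + j)) := by
  set M := N - l
  set a := x * q ^ l
  have ha : ‖a‖ < 1 := norm_mul_pow_lt_one hx hq.le l
  have hq2 : ‖q ^ 2‖ < 1 := by simpa [sq] using norm_mul_pow_lt_one hq hq.le 1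
  have ha2 : ‖a ^ 2‖ < 1 := by simpa [sq] using norm_mul_pow_lt_one ha ha.le 1
  have hfin (m : ℕ) (hm : m ∉ range (M + 1)) : qbinomNat q M m = 0 :=
    qbinomNat_of_lt q (by simpa using hm)
  have hHsum := summable_norm_qbinomNat_add_self_mul hq2 M ha2
  have hGsum := summable_norm_comp_div_two_mul_pow hHsum
  have hFsum : Summable fun m => ‖qbinomNat q M m * (q ^ m.choose 2 * (a * q) ^ m)‖ :=
    summable_of_ne_finset_zero (s := range (M + 1)) fun m hm => by simp [hfin m hm]
  simp only [euler_summand_eq_mul hN q x]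
  rw [← tsum_mul_tsum_of_summable_norm hFsum hGsum,
    tsum_eq_sum (s := range (M + 1)) fun m hm => by simp [hfin m hm],
    sum_range_qbinomNat_mul hq, tsum_comp_div_two_mul_pow hHsum.of_norm,
    tsum_qbinomNat_add_self_mul hq2 M ha2]
  have hrhs : ∏ j ∈ range (M + 1), (1 - x * q ^ (l + j)) = qPoch a q (M + 1) := by
    simp only [qPoch, a, pow_add, mul_assoc]
  rw [qPoch_neg_mul_mul_inv_qPoch_sq ha hq.le, hrhs, one_div]

/-- the `k = 0` (Euler) case of the bounded double-sum identity:
the double sum equals `1/(xq^l;q)_{N-l+1}`. -/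
theorem stmt19 (N l : ℕ) (hl : 0 < l) (hN : l ≤ N) (q x : ℂ) (hq : ‖q‖ < 1)
    (hx : ‖x‖ < 1) :
    ∑' p : ℕ × ℕ, x ^ (p.1 + p.2) * q ^ ((p.1 + p.2) * l + p.1 * (p.1 + 1) / 2)
        * qbinom q ((N : ℤ) - l) p.1
        * qbinom (q ^ 2) ((N : ℤ) - l + (p.2 / 2 : ℕ)) ((p.2 / 2 : ℕ) : ℤ)
      = 1 / ∏ j ∈ Finset.range (N - l + 1), (1 - x * q ^ (l + j)) :=
  stmt19_general N l hN q x hq hx
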